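/- arXiv:0803.2544 — 3 statements merged into one kernel-verified Lean document; each statement's English description precedes it below -/
import Mathlib

section
/- Let R be a ring and M an R-module admitting a projective resolution P_* → M such that P_j is finitely generated for all j ≥ n (some n). Then M admits a free resolution F_* → M such that F_j is finitely generated for all j ≥ n+1. -/
/-!
Add to `P` a contractible complex of projectives: for modules `Q j` with `Q 0 = 0`, the direct sum
of the disks `Q (j + 1) = Q (j + 1)` in degrees `j + 1, j`. The result is still a resolution of
`M`, with `P j ⊕ Q j ⊕ Q (j + 1)` in degree `j`, and the `Q j` are chosen inductively to make these
free: for `j < n` the Eilenberg swindle gives a free `Q (j + 1)` with `P j ⊕ Q (j + 1)` free; then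
`Q (n + 1)` is a finitely generated complement of `P n`, and for `j > n`, `Q (j + 1)` is a finitely
generated complement of `P j ⊕ Q j`.
-/

universe u v

section Swindle

variable {R : Type*} [Semiring R] {K M F : Type*} [AddCommMonoid K] [Module R K]
  [AddCommMonoid M] [Module R M] [AddCommMonoid F] [Module R F]

variable (R K M) in
noncomputable def Finsupp.prodLEquiv (α : Type*) : (α →₀ K × M) ≃ₗ[R] (α →₀ K) × (α →₀ M) :=
  LinearEquiv.ofLinearMap
    ((Finsupp.mapRange.linearMap (LinearMap.fst R K M)).prod
      (Finsupp.mapRange.linearMap (LinearMap.snd R K M)))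
    ((Finsupp.mapRange.linearMap (LinearMap.inl R K M)).coprod
      (Finsupp.mapRange.linearMap (LinearMap.inr R K M)))
    (by ext <;> simp) (by ext <;> simp)

variable (R M) in
noncomputable def Finsupp.natProdLEquiv : ((ℕ →₀ M) × M) ≃ₗ[R] (ℕ →₀ M) :=
  (LinearEquiv.prodCongr (.refl R _) (Finsupp.uniqueLinearEquiv R M PUnit.unit).symm).trans <|
    (Finsupp.sumFinsuppLEquivProdFinsupp R).symm.trans
      (Finsupp.domLCongr Equiv.natSumPUnitEquivNat.{0})

/-- `M ⊕ (K ⊕ M)^(ℕ) ≅ K^(ℕ) ⊕ (M^(ℕ) ⊕ M) ≅ K^(ℕ) ⊕ M^(ℕ) ≅ (K ⊕ M)^(ℕ)` -/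
noncomputable def Finsupp.swindleLEquiv (e : F ≃ₗ[R] K × M) : (M × (ℕ →₀ F)) ≃ₗ[R] (ℕ →₀ F) :=
  (LinearEquiv.prodCongr (.refl R M)
      ((Finsupp.mapRange.linearEquiv e).trans (Finsupp.prodLEquiv R K M ℕ))).trans <|
    (LinearEquiv.prodComm R _ _).trans <| (LinearEquiv.prodAssoc R _ _ _).trans <|
      (LinearEquiv.prodCongr (.refl R _) (Finsupp.natProdLEquiv R M)).trans <|
        (Finsupp.prodLEquiv R K M ℕ).symm.trans (Finsupp.mapRange.linearEquiv e.symm)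

end Swindle

namespace Module

variable {R : Type u} [Ring R]

theorem nonempty_linearEquiv_ker_prod_of_surjective {M N : Type*} [AddCommGroup M] [Module R M]
    [AddCommGroup N] [Module R N] [Projective R M] (g : N →ₗ[R] M) (hg : Function.Surjective g) :
    Nonempty (N ≃ₗ[R] LinearMap.ker g × M) :=
  let ⟨s, hs⟩ := projective_lifting_property g .id hg
  ⟨((LinearMap.exact_subtype_ker_map g).splitSurjectiveEquiv
    (Submodule.injective_subtype _) ⟨s, hs⟩).1⟩

variable (R) in
theorem Projective.exists_free_prod_free (M : Type v) [AddCommGroup M] [Module R M]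
    [Projective R M] :
    ∃ (G : Type max v u) (_ : AddCommGroup G) (_ : Module R G), Free R G ∧ Free R (M × G) := by
  obtain ⟨e⟩ := nonempty_linearEquiv_ker_prod_of_surjective
    (Finsupp.linearCombination R (id : M → M)) (fun x => ⟨Finsupp.single x 1, by simp⟩)
  exact ⟨ℕ →₀ M →₀ R, inferInstance, inferInstance, inferInstance,
    Free.of_equiv (Finsupp.swindleLEquiv e).symm⟩

variable (R) in
theorem Projective.exists_finite_projective_free_prod (M : Type v) [AddCommGroup M] [Module R M]
    [Projective R M] [Module.Finite R M] :
    ∃ (C : Type u) (_ : AddCommGroup C) (_ : Module R C),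
      Projective R C ∧ Module.Finite R C ∧ Free R (M × C) := by
  obtain ⟨k, g, hg⟩ := Module.Finite.exists_fin' R M
  obtain ⟨e⟩ := nonempty_linearEquiv_ker_prod_of_surjective g hg
  refine ⟨LinearMap.ker g, inferInstance, inferInstance, ?_, ?_,
    Free.of_equiv (e.trans (LinearEquiv.prodComm R _ _))⟩
  · exact Projective.of_split (M := Fin k → R) (e.symm.toLinearMap ∘ₗ LinearMap.inl R _ M)
      (LinearMap.fst R _ M ∘ₗ e.toLinearMap) (by ext; simp)
  · exact Module.Finite.of_surjective (LinearMap.fst R _ M ∘ₗ e.toLinearMap)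
      (Prod.fst_surjective.comp e.surjective)

theorem free_prod_prod_of_free_of_free_prod {X Q Q' : Type*} [AddCommGroup X] [Module R X]
    [AddCommGroup Q] [Module R Q] [AddCommGroup Q'] [Module R Q'] [Free R Q] [Free R (X × Q')] :
    Free R (X × Q × Q') :=
  Free.of_equiv <| (LinearEquiv.prodAssoc R Q X Q').symm.trans <|
    (LinearEquiv.prodCongr (LinearEquiv.prodComm R Q X) (.refl R Q')).trans
      (LinearEquiv.prodAssoc R X Q Q')

theorem exists_complement_step (n j : ℕ) (X Q : Type u) [AddCommGroup X] [Module R X]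
    [AddCommGroup Q] [Module R Q] [Projective R X] [Projective R Q]
    (hX : n ≤ j → Module.Finite R X) (hQfree : j ≤ n → Free R Q)
    (hQfin : n < j → Module.Finite R Q) :
    ∃ (Q' : Type u) (_ : AddCommGroup Q') (_ : Module R Q'), Projective R Q' ∧
      (j + 1 ≤ n → Free R Q') ∧ (n < j + 1 → Module.Finite R Q') ∧ Free R (X × Q × Q') := by
  rcases lt_or_ge j n with hjn | hnj
  · have := hQfree hjn.le
    obtain ⟨G, _, _, hG, hXG⟩ := Projective.exists_free_prod_free R X
    exact ⟨G, _, _, inferInstance, fun _ => hG, fun h => absurd h (by omega),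
      free_prod_prod_of_free_of_free_prod⟩
  have := hX hnj
  rcases hnj.eq_or_lt with rfl | hnj
  · have := hQfree le_rfl
    obtain ⟨C, _, _, hC, hCfin, hXC⟩ := Projective.exists_finite_projective_free_prod R X
    exact ⟨C, _, _, hC, fun h => absurd h (by omega), fun _ => hCfin,
      free_prod_prod_of_free_of_free_prod⟩
  · have := hQfin hnj
    obtain ⟨C, _, _, hC, hCfin, hXQC⟩ := Projective.exists_finite_projective_free_prod R (X × Q)
    exact ⟨C, _, _, hC, fun h => absurd h (by omega), fun _ => hCfin,
      Free.of_equiv (LinearEquiv.prodAssoc R X Q C)⟩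

theorem exists_complement_seq (n : ℕ) (X : ℕ → ModuleCat.{u} R) [∀ j, Projective R (X j)]
    (hX : ∀ j, n ≤ j → Module.Finite R (X j)) :
    ∃ Q : ℕ → ModuleCat.{u} R, Subsingleton (Q 0) ∧ (∀ j, Free R (X j × Q j × Q (j + 1))) ∧
      ∀ j, n < j → Module.Finite R (Q j) := by
  let Admissible (j : ℕ) (Q : ModuleCat.{u} R) : Prop :=
    Projective R Q ∧ (j ≤ n → Free R Q) ∧ (n < j → Module.Finite R Q)
  have step (j : ℕ) (Q : ModuleCat.{u} R) : ∃ Q' : ModuleCat.{u} R,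
      Admissible j Q → Admissible (j + 1) Q' ∧ Free R (X j × Q × Q') := by
    by_cases hQ : Admissible j Q
    · obtain ⟨_, hQfree, hQfin⟩ := hQ
      obtain ⟨Q', _, _, hQ', hQ'free, hQ'fin, hfree⟩ :=
        exists_complement_step n j (X j) Q (hX j) hQfree hQfin
      exact ⟨ModuleCat.of R Q', fun _ => ⟨⟨hQ', hQ'free, hQ'fin⟩, hfree⟩⟩
    · exact ⟨Q, fun h => absurd h hQ⟩
  choose next hnext using step
  let Q (j : ℕ) : ModuleCat.{u} R := Nat.rec (ModuleCat.of R PUnit) next j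
  have hQ (j : ℕ) : Admissible j (Q j) := by
    induction j with
    | zero =>
      show Admissible 0 (ModuleCat.of R PUnit)
      exact ⟨inferInstance, fun _ => inferInstance, fun h => absurd h (Nat.not_lt_zero n)⟩
    | succ j ih => exact (hnext j (Q j) ih).1
  exact ⟨Q, show Subsingleton PUnit from inferInstance, fun j => (hnext j (Q j) (hQ j)).2,
    fun j => (hQ j).2.2⟩

end Module

open CategoryTheory Limits

section Disks

variable {V : Type*} [Category V] [Preadditive V] [HasBinaryBiproducts V]

noncomputable def HomotopyEquiv.biprodOfContractible {ι : Type*} {c : ComplexShape ι}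
    {K T : HomologicalComplex V c} (h : Homotopy (𝟙 T) 0) : HomotopyEquiv (K ⊞ T) K where
  hom := biprod.fst
  inv := biprod.inl
  homotopyHomInvId :=
    (Homotopy.ofEq (by simp)).trans <|
      ((Homotopy.refl (biprod.fst ≫ biprod.inl)).add
        ((h.compLeft biprod.snd).compRight biprod.inr).symm).trans <|
        Homotopy.ofEq (by simp)
  homotopyInvHomId := Homotopy.ofEq (by simp)

namespace ChainComplex

/-- When `Q 0 = 0`, the direct sum of the disks `Q (j + 1) = Q (j + 1)` in degrees `j + 1, j`. -/
noncomputable def disks (Q : ℕ → V) : ChainComplex V ℕ :=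
  of (fun j => Q j ⊞ Q (j + 1)) (fun _ => biprod.fst ≫ biprod.inr) (by simp)

noncomputable def disksContraction (Q : ℕ → V) (hQ : IsZero (Q 0)) :
    Homotopy (𝟙 (disks Q)) 0 := by
  refine (Homotopy.ofEq ?_).trans (Homotopy.nullHomotopy' fun i j hij =>
    (biprod.snd ≫ biprod.inl : Q i ⊞ Q (i + 1) ⟶ Q (i + 1) ⊞ Q (i + 2)) ≫
      ((disks Q).XIsoOfEq hij).hom)
  ext (_ | i) : 1
  · rw [Homotopy.nullHomotopicMap'_f_of_not_rel_left (c := ComplexShape.down ℕ) rfl (by simp)]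
    simp only [disks, HomologicalComplex.id_f, HomologicalComplex.XIsoOfEq_rfl,
      Iso.refl_hom, Category.id_comp, Category.assoc, of_d]
    rw [← biprod.total, hQ.eq_of_tgt biprod.fst 0]
    simp
  · rw [Homotopy.nullHomotopicMap'_f (c := ComplexShape.down ℕ) rfl rfl]
    simp only [disks, HomologicalComplex.id_f, HomologicalComplex.XIsoOfEq_rfl, Iso.refl_hom,
      Category.comp_id, Category.assoc, of_d, biprod.inr_snd_assoc, biprod.inl_fst_assoc]
    exact biprod.total.symm

noncomputable def biprodDisksXLinearEquiv {R : Type u} [Ring R]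
    (K : ChainComplex (ModuleCat.{v} R) ℕ) (Q : ℕ → ModuleCat.{v} R) (j : ℕ) :
    (K ⊞ disks Q).X j ≃ₗ[R] K.X j × Q j × Q (j + 1) :=
  ((K.biprodXIso _ j).trans (ModuleCat.biprodIsoProd _ _)).toLinearEquiv.trans
    (.prodCongr (.refl R _) (ModuleCat.biprodIsoProd (Q j) (Q (j + 1))).toLinearEquiv)

end ChainComplex

end Disks

noncomputable def CategoryTheory.ProjectiveResolution.ofQuasiIso {C : Type*} [Category C]
    [HasZeroObject C] [Preadditive C] {Z : C} (P : ProjectiveResolution Z)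
    {F : ChainComplex C ℕ} [∀ j, Projective (F.X j)] [∀ j, F.HasHomology j]
    (f : F ⟶ P.complex) [QuasiIso f] : ProjectiveResolution Z where
  complex := F
  π := f ≫ P.π

/-- If an `R`-module `M` has a projective resolution `P_*` with `P_j` finitely generated for all
`j ≥ n`, then `M` has a free resolution `F_*` with `F_j` finitely generated for all `j ≥ n + 1`. -/
theorem free_resolution_eventually_fg_of_projective_resolution_eventually_fg
    {R : Type u} [Ring R] (M : ModuleCat.{u} R) (n : ℕ)
    (P : ProjectiveResolution M)
    (hP : ∀ j, n ≤ j → Module.Finite R (P.complex.X j)) :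
    ∃ F : ProjectiveResolution M,
      (∀ j, Module.Free R (F.complex.X j)) ∧
      (∀ j, n + 1 ≤ j → Module.Finite R (F.complex.X j)) := by
  obtain ⟨Q, hQ0, hfree, hfin⟩ := Module.exists_complement_seq n P.complex.X hP
  let e := P.complex.biprodDisksXLinearEquiv Q
  have hF (j : ℕ) : Module.Free R ((P.complex ⊞ ChainComplex.disks Q).X j) :=
    .of_equiv' (hfree j) (e j).symm
  have contraction := ChainComplex.disksContraction Q (ModuleCat.isZero_of_subsingleton (Q 0))
  refine ⟨P.ofQuasiIso (HomotopyEquiv.biprodOfContractible (K := P.complex) contraction).hom,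
    hF, fun j hj => ?_⟩
  have := hP j (by omega)
  have := hfin j (by omega)
  have := hfin (j + 1) (by omega)
  exact .equiv (e j).symm
end

section
/- Let R be a ring and suppose 0 → N' → N → P_n → ⋯ → P_0 → M → 0 is an exact sequence of R-modules in which each P_i is projective, and both N' and N admit projective resolutions that are eventually finitely generated. Then the partial projective resolution P_n → ⋯ → P_0 → M → 0 extends to a projective resolution of M that is eventually finitely generated. -/
/-!
Let `K` be the kernel of `P₀ → M`. Then `0 → N' → N → Pₙ → ⋯ → P₁ → K → 0` is exact of the same
shape, one step shorter, so by induction everything reduces to splicing a resolution of `K` with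
`P₀ → M`, which shifts its terms up by one degree. At the bottom of the induction `K` is the
cokernel of the monomorphism `N' → N`; lifting it to a chain map `f` between the given
resolutions of `N'` and `N`, the mapping cone of `f` is a projective resolution of `K` (its
homology sequence reduces to `0 → N' → N → K → 0`) whose term in degree `j + 1` is `P'ⱼ × Pⱼ₊₁`,
hence finitely generated for large `j`.
-/

universe v u

open CategoryTheory CategoryTheory.Limits

namespace CategoryTheory.ShortComplex

variable {C : Type*} [Category* C] [Abelian C] {X₀ X₁ X₂ X₃ Y : C}

lemma exact_iff_of_comp_mono {f : X₁ ⟶ X₂} {g : X₂ ⟶ X₃} {h : X₂ ⟶ Y} (i : X₃ ⟶ Y) [Mono i]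
    (hgi : g ≫ i = h) (w : f ≫ g = 0) (w' : f ≫ h = 0) :
    (mk f h w').Exact ↔ (mk f g w).Exact := by
  let φ : mk f g w ⟶ mk f h w' := homMk (𝟙 _) (𝟙 _) i (by simp) (by simp [hgi])
  have : Epi φ.τ₁ := inferInstanceAs (Epi (𝟙 X₁))
  have : IsIso φ.τ₂ := inferInstanceAs (IsIso (𝟙 X₂))
  have : Mono φ.τ₃ := ‹Mono i›
  exact (exact_iff_of_epi_of_isIso_of_mono φ).symm

lemma exact_iff_of_epi_comp {f : X₁ ⟶ X₂} {g : X₂ ⟶ X₃} {h : X₀ ⟶ X₂} (p : X₀ ⟶ X₁) [Epi p]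
    (hpf : p ≫ f = h) (w : f ≫ g = 0) (w' : h ≫ g = 0) :
    (mk h g w').Exact ↔ (mk f g w).Exact := by
  let φ : mk h g w' ⟶ mk f g w := homMk p (𝟙 _) (𝟙 _) (by simp [hpf]) (by simp)
  have : Epi φ.τ₁ := ‹Epi p›
  have : IsIso φ.τ₂ := inferInstanceAs (IsIso (𝟙 X₂))
  have : Mono φ.τ₃ := inferInstanceAs (Mono (𝟙 X₃))
  exact exact_iff_of_epi_of_isIso_of_mono φ

end CategoryTheory.ShortComplex

namespace ChainComplex

variable {C : Type*} [Category* C] [Abelian C]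

lemma d_comp_toSingle₀_f_zero {K : ChainComplex C ℕ} {X : C} (φ : K ⟶ (single₀ C).obj X) :
    K.d 1 0 ≫ φ.f 0 = 0 :=
  ((toSingle₀Equiv K X) φ).2

lemma exactAt_succ_iff (K : ChainComplex C ℕ) (n : ℕ) :
    K.ExactAt (n + 1) ↔
      (ShortComplex.mk (K.d (n + 2) (n + 1)) (K.d (n + 1) n) (K.d_comp_d _ _ _)).Exact :=
  HomologicalComplex.exactAt_iff' K (n + 2) (n + 1) n (by simp) (by simp)

/-- Taking `g` with `φ.f 0 = g` lets callers state exactness in degree `0` with target `X` itself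
instead of `((single₀ C).obj X).X 0`. -/
lemma quasiIso_toSingle₀_iff {K : ChainComplex C ℕ} {X : C} (φ : K ⟶ (single₀ C).obj X)
    {g : K.X 0 ⟶ X} (hg : φ.f 0 = g) :
    QuasiIso φ ↔
      ((ShortComplex.mk (K.d 1 0) g (hg ▸ d_comp_toSingle₀_f_zero φ)).Exact ∧ Epi g) ∧
        ∀ n, K.ExactAt (n + 1) := by
  subst hg
  have h₀ : QuasiIsoAt φ 0 ↔
      (ShortComplex.mk _ _ (d_comp_toSingle₀_f_zero φ)).Exact ∧ Epi (φ.f 0) := by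
    rw [quasiIsoAt₀_iff, ShortComplex.quasiIso_iff_of_zeros']
    · rfl
    · exact K.shape 0 0 (by simp)
    all_goals rfl
  rw [quasiIso_iff, ← Nat.and_forall_add_one]
  refine and_congr h₀ (forall_congr' fun n => ?_)
  exact quasiIsoAt_iff_exactAt' φ (n + 1) (exactAt_succ_single_obj _ _)

variable {K : ChainComplex C ℕ} {X : C} (φ : K ⟶ (single₀ C).obj X)

lemma shortExact_of_quasiIso_of_isZero [QuasiIso φ] {g : K.X 0 ⟶ X} (hg : φ.f 0 = g)
    (hK : IsZero (K.X 2)) :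
    (ShortComplex.mk (K.d 1 0) g (hg ▸ d_comp_toSingle₀_f_zero φ)).ShortExact := by
  obtain ⟨⟨hexact, hepi⟩, hK'⟩ := (quasiIso_toSingle₀_iff φ hg).1 ‹_›
  exact { exact := hexact
          mono_f := ((exactAt_succ_iff K 0).1 (hK' 0)).mono_g (hK.eq_of_src _ _)
          epi_g := hepi }

noncomputable def truncateToKernel : truncate.obj K ⟶ (single₀ C).obj (kernel (φ.f 0)) :=
  (toSingle₀Equiv _ _).symm ⟨kernel.lift _ (K.d 1 0) (d_comp_toSingle₀_f_zero φ), by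
    rw [← cancel_mono (kernel.ι (φ.f 0)), Category.assoc, zero_comp]
    exact (congrArg _ (kernel.lift_ι _ _ _)).trans (K.d_comp_d 2 1 0)⟩

lemma truncateToKernel_f_zero :
    (truncateToKernel φ).f 0 = kernel.lift _ (K.d 1 0) (d_comp_toSingle₀_f_zero φ) :=
  toSingle₀Equiv_symm_apply_f_zero _ _

lemma truncateToKernel_f_zero_comp_ι : (truncateToKernel φ).f 0 ≫ kernel.ι (φ.f 0) = K.d 1 0 := by
  rw [truncateToKernel_f_zero]
  exact kernel.lift_ι _ _ _

instance quasiIso_truncateToKernel [QuasiIso φ] : QuasiIso (truncateToKernel φ) := by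
  obtain ⟨⟨hexact, -⟩, hK⟩ := (quasiIso_toSingle₀_iff φ rfl).1 ‹_›
  refine (quasiIso_toSingle₀_iff _ (truncateToKernel_f_zero φ)).2 ⟨⟨?_, hexact.epi_kernelLift⟩,
    fun n => ?_⟩
  · exact (ShortComplex.exact_iff_of_comp_mono (kernel.ι (φ.f 0)) (kernel.lift_ι _ _ _) _ _).1
      ((exactAt_succ_iff K 0).1 (hK 0))
  · exact (exactAt_succ_iff _ n).2 ((exactAt_succ_iff K (n + 1)).1 (hK (n + 1)))

lemma shortExact_kernel [QuasiIso φ] :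
    (ShortComplex.mk (kernel.ι (φ.f 0)) (φ.f 0) (kernel.condition _)).ShortExact :=
  { exact := ShortComplex.kernelSequence_exact _
    epi_g := ((quasiIso_toSingle₀_iff φ rfl).1 ‹_›).1.2 }

end ChainComplex

namespace CategoryTheory.ProjectiveResolution

variable {C : Type*} [Category* C] [Abelian C] {S : ShortComplex C}

noncomputable def splice (P : ProjectiveResolution S.X₁) (hS : S.ShortExact) [Projective S.X₂] :
    ProjectiveResolution S.X₃ where
  complex := P.complex.augment (P.π.f 0 ≫ S.f)
    ((P.complex_d_comp_π_f_zero_assoc S.f).trans zero_comp)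
  projective
    | 0 => ‹Projective S.X₂›
    | n + 1 => P.projective n
  π := (ChainComplex.toSingle₀Equiv _ _).symm ⟨S.g, (Category.assoc _ _ _).trans
    ((congrArg (P.π.f 0 ≫ ·) S.zero).trans comp_zero)⟩
  quasiIso := by
    have := hS.mono_f
    refine (ChainComplex.quasiIso_toSingle₀_iff _
      (ChainComplex.toSingle₀Equiv_symm_apply_f_zero _ _)).2
        ⟨⟨(ShortComplex.exact_iff_of_epi_comp (P.π.f 0) rfl S.zero _).2 hS.exact, hS.epi_g⟩, ?_⟩
    rintro (_ | n)
    · exact (ChainComplex.exactAt_succ_iff _ 0).2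
        ((ShortComplex.exact_iff_of_comp_mono S.f rfl _ _).2 P.exact₀)
    · exact (ChainComplex.exactAt_succ_iff _ (n + 1)).2
        ((ChainComplex.exactAt_succ_iff P.complex n).1 (P.complex_exactAt_succ n))

variable {K : ChainComplex C ℕ} {M : C}

def Extends (Q : ProjectiveResolution M) (π : K ⟶ (ChainComplex.single₀ C).obj M) (n : ℕ) : Prop :=
  ∃ e : ∀ i, i ≤ n → (Q.complex.X i ≅ K.X i),
    (∀ i (h : i + 1 ≤ n),
      Q.complex.d (i + 1) i ≫ (e i (Nat.le_of_succ_le h)).hom = (e (i + 1) h).hom ≫ K.d (i + 1) i) ∧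
    Q.π.f 0 = (e 0 (Nat.zero_le n)).hom ≫ π.f 0

variable (π : K ⟶ (ChainComplex.single₀ C).obj M) [QuasiIso π] [Projective (K.X 0)]
  (P : ProjectiveResolution (kernel (π.f 0)))

lemma splice_π_f_zero : (P.splice (ChainComplex.shortExact_kernel π)).π.f 0 = π.f 0 :=
  ChainComplex.toSingle₀Equiv_symm_apply_f_zero _ _

lemma splice_extends_zero : (P.splice (ChainComplex.shortExact_kernel π)).Extends π 0 :=
  ⟨fun | 0, _ => Iso.refl _ | _ + 1, h => absurd h (by omega), fun _ h => absurd h (by omega),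
    (splice_π_f_zero π P).trans (Category.id_comp _).symm⟩

lemma Extends.splice {n : ℕ} (hP : P.Extends (ChainComplex.truncateToKernel π) n) :
    (P.splice (ChainComplex.shortExact_kernel π)).Extends π (n + 1) := by
  obtain ⟨e, he, hπ⟩ := hP
  refine ⟨fun | 0, _ => Iso.refl _ | i + 1, _ => e i (by omega), ?_,
    (splice_π_f_zero π P).trans (Category.id_comp _).symm⟩
  rintro (_ | i) h
  · change (P.π.f 0 ≫ kernel.ι (π.f 0)) ≫ 𝟙 _ = (e 0 _).hom ≫ K.d 1 0
    rw [Category.comp_id, hπ]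
    exact (Category.assoc _ _ _).trans (congrArg _ (ChainComplex.truncateToKernel_f_zero_comp_ι π))
  · exact he i (by omega)

end CategoryTheory.ProjectiveResolution

namespace ModuleCat

variable {R : Type u} [Ring R]

lemma exact_mk_iff {X₁ X₂ X₃ : ModuleCat.{v} R} {f : X₁ ⟶ X₂} {g : X₂ ⟶ X₃} (w : f ≫ g = 0) :
    (ShortComplex.mk f g w).Exact ↔ ∀ x, g x = 0 → ∃ y, f y = x :=
  ShortComplex.moduleCat_exact_iff _

section MappingCone

lemma d_comp_d_apply {ι : Type*} {c : ComplexShape ι} (K : HomologicalComplex (ModuleCat.{v} R) c)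
    (i j k : ι) (x : K.X i) : K.d j k (K.d i j x) = 0 :=
  LinearMap.congr_fun (congrArg Hom.hom (K.d_comp_d i j k)) x

lemma comm_apply {ι : Type*} {c : ComplexShape ι} {A B : HomologicalComplex (ModuleCat.{v} R) c}
    (f : A ⟶ B) (i j : ι) (x : A.X i) : B.d i j (f.f i x) = f.f j (A.d i j x) :=
  LinearMap.congr_fun (congrArg Hom.hom (f.comm i j)) x

variable {A B : ChainComplex (ModuleCat.{v} R) ℕ} (f : A ⟶ B)

variable (A B) in
def mappingConeX : ℕ → ModuleCat.{v} R
  | 0 => B.X 0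
  | j + 1 => of R (A.X j × B.X (j + 1))

def mappingConeD : ∀ j, mappingConeX A B (j + 1) ⟶ mappingConeX A B j
  | 0 => ofHom ((f.f 0).hom.coprod (B.d 1 0).hom)
  | j + 1 => ofHom ((-((A.d (j + 1) j).hom ∘ₗ LinearMap.fst R _ _)).prod
      ((f.f (j + 1)).hom.coprod (B.d (j + 2) (j + 1)).hom))

lemma mappingConeD_zero_apply (x : A.X 0 × B.X 1) :
    mappingConeD f 0 x = f.f 0 x.1 + B.d 1 0 x.2 :=
  rfl

lemma mappingConeD_succ_apply (j : ℕ) (x : A.X (j + 1) × B.X (j + 2)) :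
    mappingConeD f (j + 1) x = (-A.d (j + 1) j x.1, f.f (j + 1) x.1 + B.d (j + 2) (j + 1) x.2) :=
  rfl

lemma mappingConeD_comp_mappingConeD : ∀ j, mappingConeD f (j + 1) ≫ mappingConeD f j = 0
  | 0 => by
    ext ⟨a, b⟩
    change mappingConeD f 0 (mappingConeD f 1 (a, b)) = 0
    simp [mappingConeD_zero_apply, mappingConeD_succ_apply, comm_apply, d_comp_d_apply]
    rfl
  | j + 1 => by
    ext ⟨a, b⟩
    change mappingConeD f (j + 1) (mappingConeD f (j + 2) (a, b)) = 0
    simp [mappingConeD_succ_apply, comm_apply, d_comp_d_apply]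
    rfl

def mappingCone : ChainComplex (ModuleCat.{v} R) ℕ :=
  ChainComplex.of (mappingConeX A B) (mappingConeD f) (mappingConeD_comp_mappingConeD f)

lemma mappingCone_d_succ (j : ℕ) : (mappingCone f).d (j + 1) j = mappingConeD f j :=
  ChainComplex.of_d _ _ j

lemma exists_mappingConeD_succ_eq {j : ℕ} {a : A.X j} {b : B.X (j + 1)}
    (ha : ∃ a₁, A.d (j + 1) j a₁ = a) (hab : f.f j a + B.d (j + 1) j b = 0)
    (hB : (ShortComplex.mk _ _ (B.d_comp_d (j + 2) (j + 1) j)).Exact) :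
    ∃ y, mappingConeD f (j + 1) y = (a, b) := by
  obtain ⟨a₁, rfl⟩ := ha
  obtain ⟨b₁, hb₁⟩ := (exact_mk_iff _).1 hB (f.f (j + 1) a₁ + b) (by
    simpa [comm_apply] using hab)
  refine ⟨(-a₁, b₁), Prod.ext ?_ ?_⟩ <;> simp [mappingConeD_succ_apply, hb₁]

lemma exact_mappingCone_d_one_zero_iff {Y : ModuleCat.{v} R} {g : (mappingCone f).X 0 ⟶ Y}
    (w : (mappingCone f).d 1 0 ≫ g = 0) :
    (ShortComplex.mk _ g w).Exact ↔ ∀ x, g x = 0 → ∃ y : A.X 0 × B.X 1, mappingConeD f 0 y = x :=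
  (exact_mk_iff w).trans (by rw [mappingCone_d_succ]; rfl)

lemma mappingCone_exactAt_succ_iff (j : ℕ) :
    (mappingCone f).ExactAt (j + 1) ↔ ∀ x : A.X j × B.X (j + 1), mappingConeD f j x = 0 →
      ∃ y : A.X (j + 1) × B.X (j + 2), mappingConeD f (j + 1) y = x := by
  refine (ChainComplex.exactAt_succ_iff _ j).trans ((exact_mk_iff _).trans ?_)
  rw [mappingCone_d_succ, mappingCone_d_succ]
  rfl

end MappingCone

section Resolution

variable {S : ShortComplex (ModuleCat.{v} R)} {PA : ProjectiveResolution S.X₁}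
  {PB : ProjectiveResolution S.X₂} {f : PA.complex ⟶ PB.complex}

lemma π_f_zero_f_zero_apply (hf : f.f 0 ≫ PB.π.f 0 = PA.π.f 0 ≫ S.f) (a : PA.complex.X 0) :
    PB.π.f 0 (f.f 0 a) = S.f (PA.π.f 0 a) :=
  LinearMap.congr_fun (congrArg Hom.hom hf) a

lemma π_f_zero_mappingConeD_zero (hf : f.f 0 ≫ PB.π.f 0 = PA.π.f 0 ≫ S.f)
    (x : PA.complex.X 0 × PB.complex.X 1) :
    PB.π.f 0 (mappingConeD f 0 x) = S.f (PA.π.f 0 x.1) := by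
  have h₁ := π_f_zero_f_zero_apply hf x.1
  have h₂ : PB.π.f 0 (PB.complex.d 1 0 x.2) = 0 :=
    LinearMap.congr_fun (congrArg Hom.hom PB.complex_d_comp_π_f_zero) x.2
  rw [mappingConeD_zero_apply, map_add, h₁, h₂]
  exact add_zero _

lemma mappingCone_d_one_zero_comp_π (hf : f.f 0 ≫ PB.π.f 0 = PA.π.f 0 ≫ S.f) :
    (mappingCone f).d 1 0 ≫ PB.π.f 0 ≫ S.g = 0 := by
  rw [mappingCone_d_succ]
  ext ⟨a, b⟩
  change S.g (PB.π.f 0 (mappingConeD f 0 (a, b))) = 0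
  rw [π_f_zero_mappingConeD_zero hf]
  exact S.zero_apply _

lemma mappingCone_exact₀ (hS : S.ShortExact) (hf : f.f 0 ≫ PB.π.f 0 = PA.π.f 0 ≫ S.f) :
    (ShortComplex.mk _ _ (mappingCone_d_one_zero_comp_π hf)).Exact := by
  refine (exact_mappingCone_d_one_zero_iff f _).2 fun (x : PB.complex.X 0) hx => ?_
  obtain ⟨c, hc⟩ := (ShortComplex.moduleCat_exact_iff _).1 hS.exact (PB.π.f 0 x) hx
  obtain ⟨a, rfl⟩ := (ModuleCat.epi_iff_surjective (PA.π.f 0)).1 inferInstance c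
  obtain ⟨b, hb⟩ := (exact_mk_iff _).1 PB.exact₀ (x - f.f 0 a) (by
    rw [map_sub, sub_eq_zero]
    exact hc.symm.trans (π_f_zero_f_zero_apply hf a).symm)
  refine ⟨(a, b), ?_⟩
  rw [mappingConeD_zero_apply, hb]
  abel

lemma mappingCone_exactAt_one (hS : S.ShortExact) (hf : f.f 0 ≫ PB.π.f 0 = PA.π.f 0 ≫ S.f) :
    (mappingCone f).ExactAt 1 := by
  refine (mappingCone_exactAt_succ_iff f _).2 fun ⟨a, b⟩ hab => ?_
  have ha : PA.π.f 0 a = 0 := hS.moduleCat_injective_f <|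
    (π_f_zero_mappingConeD_zero hf (a, b)).symm.trans <| by
      rw [hab]
      exact (map_zero _).trans (map_zero _).symm
  exact exists_mappingConeD_succ_eq f ((exact_mk_iff _).1 PA.exact₀ a ha) hab
    (PB.exact_succ 0)

lemma mappingCone_exactAt_succ_succ (j : ℕ) : (mappingCone f).ExactAt (j + 2) := by
  refine (mappingCone_exactAt_succ_iff f _).2 fun ⟨a, b⟩ hab => ?_
  rw [mappingConeD_succ_apply] at hab
  obtain ⟨ha, hab⟩ := Prod.ext_iff.1 hab
  exact exists_mappingConeD_succ_eq f ((exact_mk_iff _).1 (PA.exact_succ j) a (neg_eq_zero.1 ha))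
    hab (PB.exact_succ (j + 1))

variable [Small.{v} R] (hS : S.ShortExact) (PA : ProjectiveResolution S.X₁)
  (PB : ProjectiveResolution S.X₂)

noncomputable def mappingConeResolution : ProjectiveResolution S.X₃ :=
  have hf := ProjectiveResolution.lift_commutes_zero S.f PA PB
  have hπ : Epi (PB.π.f 0) := inferInstance
  { complex := mappingCone (ProjectiveResolution.lift S.f PA PB)
    projective
      | 0 => PB.projective 0
      | j + 1 => inferInstanceAs (Projective (of R (PA.complex.X j × PB.complex.X (j + 1))))
    π := (ChainComplex.toSingle₀Equiv _ _).symm ⟨PB.π.f 0 ≫ S.g, mappingCone_d_one_zero_comp_π hf⟩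
    quasiIso := (ChainComplex.quasiIso_toSingle₀_iff _
      (ChainComplex.toSingle₀Equiv_symm_apply_f_zero _ _)).2
        ⟨⟨mappingCone_exact₀ hS hf, epi_comp' hπ hS.epi_g⟩, fun
          | 0 => mappingCone_exactAt_one hS hf
          | j + 1 => mappingCone_exactAt_succ_succ j⟩ }

end Resolution

end ModuleCat

namespace CategoryTheory.ProjectiveResolution

variable {R : Type u} [Ring R]

def EventuallyFinite {M : ModuleCat.{v} R} (P : ProjectiveResolution M) : Prop :=
  ∃ k, ∀ j, k ≤ j → Module.Finite R (P.complex.X j)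

variable {S : ShortComplex (ModuleCat.{v} R)} (hS : S.ShortExact)

lemma EventuallyFinite.mappingConeResolution [Small.{v} R] {PA : ProjectiveResolution S.X₁}
    {PB : ProjectiveResolution S.X₂} (hA : PA.EventuallyFinite) (hB : PB.EventuallyFinite) :
    (ModuleCat.mappingConeResolution hS PA PB).EventuallyFinite := by
  obtain ⟨kA, hkA⟩ := hA
  obtain ⟨kB, hkB⟩ := hB
  refine ⟨max kA kB + 1, fun j hj => ?_⟩
  obtain ⟨i, rfl⟩ : ∃ i, j = i + 1 := ⟨j - 1, by omega⟩
  have := hkA i (by omega)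
  have := hkB (i + 1) (by omega)
  exact inferInstanceAs (Module.Finite R (PA.complex.X i × PB.complex.X (i + 1)))

lemma EventuallyFinite.splice [Projective S.X₂] {P : ProjectiveResolution S.X₁}
    (hP : P.EventuallyFinite) : (P.splice hS).EventuallyFinite := by
  obtain ⟨k, hk⟩ := hP
  refine ⟨k + 1, fun j hj => ?_⟩
  obtain ⟨i, rfl⟩ : ∃ i, j = i + 1 := ⟨j - 1, by omega⟩
  exact hk i (by omega)

end CategoryTheory.ProjectiveResolution

/-- Suppose `0 → N' → N → P_n → ⋯ → P_0 → M → 0` is an exact sequence of `R`-modules in which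
each `P_i` is projective and both `N'` and `N` admit projective resolutions that are eventually
finitely generated.  We encode the sequence as a chain complex `C` with `C_i = P_i` for `i ≤ n`,
`C_{n+1} = N`, `C_{n+2} = N'` and `C_i = 0` for `i > n + 2`, together with a quasi-isomorphism
`π : C ⟶ M[0]` (which says exactly that the augmented sequence is exact).  Then the partial
projective resolution `P_n → ⋯ → P_0 → M → 0` can be extended to a projective resolution of `M`
that is eventually finitely generated. -/
theorem extend_partial_projective_resolution_eventually_fg
    {R : Type u} [Ring R] (n : ℕ) (M : ModuleCat.{u} R)
    (C : ChainComplex (ModuleCat.{u} R) ℕ)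
    (hproj : ∀ i, i ≤ n → Projective (C.X i))
    (hzero : ∀ i, n + 2 < i → IsZero (C.X i))
    (π : C ⟶ (ChainComplex.single₀ (ModuleCat.{u} R)).obj M)
    (hπ : QuasiIso π)
    (hN : ∃ (PN : ProjectiveResolution (C.X (n + 1))) (k : ℕ),
      ∀ j, k ≤ j → Module.Finite R (PN.complex.X j))
    (hN' : ∃ (PN' : ProjectiveResolution (C.X (n + 2))) (k : ℕ),
      ∀ j, k ≤ j → Module.Finite R (PN'.complex.X j)) :
    ∃ (Q : ProjectiveResolution M) (e : ∀ i, i ≤ n → (Q.complex.X i ≅ C.X i)),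
      (∃ k : ℕ, ∀ j, k ≤ j → Module.Finite R (Q.complex.X j)) ∧
      (∀ i (h : i + 1 ≤ n),
        Q.complex.d (i + 1) i ≫ (e i (Nat.le_of_succ_le h)).hom =
          (e (i + 1) h).hom ≫ C.d (i + 1) i) ∧
      Q.π.f 0 = (e 0 (Nat.zero_le n)).hom ≫ π.f 0 := by
  have := hproj 0 (Nat.zero_le n)
  induction n generalizing M C with
  | zero =>
    obtain ⟨PN, hPN : PN.EventuallyFinite⟩ := hN
    obtain ⟨PN', hPN' : PN'.EventuallyFinite⟩ := hN'
    have hS := ChainComplex.shortExact_of_quasiIso_of_isZero (ChainComplex.truncateToKernel π)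
      (ChainComplex.truncateToKernel_f_zero π) (hzero 3 (by omega))
    obtain ⟨e, he, hπ⟩ :=
      ProjectiveResolution.splice_extends_zero π (ModuleCat.mappingConeResolution hS PN' PN)
    exact ⟨_, e, (hPN'.mappingConeResolution hS hPN).splice _, he, hπ⟩
  | succ m ih =>
    obtain ⟨Q, e, hQ : Q.EventuallyFinite, he, hπ⟩ :=
      ih (kernel (π.f 0)) (ChainComplex.truncate.obj C)
      (fun i hi => hproj (i + 1) (by omega)) (fun i hi => hzero (i + 1) (by omega))
      (ChainComplex.truncateToKernel π) inferInstance hN hN' (hproj 1 (by omega))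
    obtain ⟨e, he, hπ⟩ := ProjectiveResolution.Extends.splice π Q ⟨e, he, hπ⟩
    exact ⟨_, e, hQ.splice _, he, hπ⟩
end

section
/- Let G be a group and M a ZG-module such that Hom-underline_{ZG}(M, −) preserves filtered colimits. Write M as the filtered colimit of its finitely generated submodules M_λ. Then there exists λ such that the quotient map M → M/M_λ factors through a projective ZG-module, and consequently M is isomorphic to a direct summand of Q ⊕ M_λ for some projective module Q. -/
universe u

open CategoryTheory CategoryTheory.Limits

variable {R : Type u} [Ring R]

/-- The additive subgroup of `Hom_R(M, N)` consisting of homomorphisms that factor through a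
projective module. -/
def projFactor (M N : ModuleCat.{u} R) : AddSubgroup (M ⟶ N) where
  carrier := {f | ∃ P : ModuleCat.{u} R, Module.Projective R P ∧
    ∃ (g : M ⟶ P) (h : P ⟶ N), g ≫ h = f}
  zero_mem' := ⟨ModuleCat.of R R, inferInstanceAs (Module.Projective R R), 0, 0, by simp⟩
  add_mem' := by
    rintro a b ⟨P₁, hP₁, g₁, h₁, rfl⟩ ⟨P₂, hP₂, g₂, h₂, rfl⟩
    haveI := hP₁; haveI := hP₂
    exact ⟨ModuleCat.of R (P₁ × P₂), inferInstanceAs (Module.Projective R (P₁ × P₂)),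
      ModuleCat.ofHom (LinearMap.prod g₁.hom g₂.hom),
      ModuleCat.ofHom (h₁.hom.comp (LinearMap.fst R P₁ P₂) + h₂.hom.comp (LinearMap.snd R P₁ P₂)),
      by ext x; rfl⟩
  neg_mem' := by
    rintro a ⟨P, hP, g, h, rfl⟩
    exact ⟨P, hP, g, -h, by ext x; rfl⟩

/-- The map on stable Hom groups induced by postcomposition with `φ`. -/
def uHomMap (M : ModuleCat.{u} R) {N N' : ModuleCat.{u} R} (φ : N ⟶ N') :
    (M ⟶ N) ⧸ projFactor M N →+ (M ⟶ N') ⧸ projFactor M N' :=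
  QuotientAddGroup.map _ _
    (AddMonoidHom.mk' (fun f => f ≫ φ) (fun f g => by simp [Preadditive.add_comp]))
    (by
      rintro f ⟨P, hP, g, h, rfl⟩
      exact ⟨P, hP, g, h ≫ φ, by simp⟩)

/-- The stable Hom functor `Hom-underline_R(M, −)`: the quotient of `Hom_R(M, −)` by the maps
factoring through a projective module. -/
def uHom (M : ModuleCat.{u} R) : ModuleCat.{u} R ⥤ AddCommGrpCat.{u} where
  obj N := AddCommGrpCat.of ((M ⟶ N) ⧸ projFactor M N)
  map φ := AddCommGrpCat.ofHom (uHomMap M φ)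
  map_id N := by
    ext f
    simp [uHomMap]
  map_comp {N N' N''} φ ψ := by
    ext f
    simp [uHomMap]
/-!
The quotients `M ⧸ N` by the finitely generated submodules `N` form a filtered diagram whose
colimit is `0`, because the `N` exhaust `M`. Since `Hom-underline(M, −)` commutes with this
colimit and vanishes at `0`, the class of the quotient map `M → M ⧸ ⊥` already vanishes at some
stage `M ⧸ N`: the quotient map `M → M ⧸ N` factors as `M → Q → M ⧸ N` with `Q` projective.
Lifting `Q → M ⧸ N` to `Q → M` then gives `Q × N ≃ M × ker (Q → M ⧸ N)` by explicit shears.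
-/

section Schanuel

variable {M P X : Type*} [AddCommGroup M] [AddCommGroup P] [AddCommGroup X]
  [Module R M] [Module R P] [Module R X]

def LinearMap.prodKerEquivProdKer {q : M →ₗ[R] X} {h : P →ₗ[R] X} {g : M →ₗ[R] P}
    {t : P →ₗ[R] M} (hg : h ∘ₗ g = q) (ht : q ∘ₗ t = h) :
    (P × ker q) ≃ₗ[R] (M × ker h) where
  toFun x := (t x.1 + x.2, ⟨x.1 - g (t x.1 + x.2), by
    have hn : q x.2 = 0 := x.2.2
    simp [← LinearMap.comp_apply h g, hg, ← LinearMap.comp_apply q t, ht, hn]⟩)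
  invFun y := (y.2 + g y.1, ⟨y.1 - t (y.2 + g y.1), by
    have hk : h y.2 = 0 := y.2.2
    simp [← LinearMap.comp_apply q t, ht, ← LinearMap.comp_apply h g, hg, hk]⟩)
  map_add' x y := by ext <;> simp <;> abel
  map_smul' r x := by ext <;> simp [smul_sub]
  left_inv x := by ext <;> simp
  right_inv y := by ext <;> simp

theorem Submodule.nonempty_prod_equiv_prod_ker_of_mkQ_eq_comp [Module.Projective R P]
    (N : Submodule R M) (g : M →ₗ[R] P) (h : P →ₗ[R] M ⧸ N) (hgh : h ∘ₗ g = N.mkQ) :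
    Nonempty ((P × N) ≃ₗ[R] (M × LinearMap.ker h)) := by
  obtain ⟨t, ht⟩ := Module.projective_lifting_property N.mkQ h N.mkQ_surjective
  exact ⟨((LinearEquiv.refl R P).prodCongr (LinearEquiv.ofEq _ _ N.ker_mkQ.symm)).trans
    (LinearMap.prodKerEquivProdKer hgh ht)⟩

end Schanuel

section QuotientDiagram

variable (M : ModuleCat.{u} R)

abbrev FGSubmodule := {N : Submodule R M // N.FG}

instance : Nonempty (FGSubmodule M) := ⟨⟨⊥, Submodule.fg_bot⟩⟩

instance : IsDirected (FGSubmodule M) (· ≤ ·) :=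
  ⟨fun N N' => ⟨⟨N.1 ⊔ N'.1, N.2.sup N'.2⟩, le_sup_left (a := N.1), le_sup_right (a := N.1)⟩⟩

def quotientDiagram : FGSubmodule M ⥤ ModuleCat.{u} R where
  obj N := ModuleCat.of R (M ⧸ N.1)
  map f := ModuleCat.ofHom (Submodule.factor (leOfHom f))
  map_id _ := by ext x; rfl
  map_comp _ _ := by ext x; rfl

variable {M}

theorem quotientDiagram_cocone_app_eq_zero (s : Cocone (quotientDiagram M)) (N : FGSubmodule M) :
    s.ι.app N = 0 := by
  ext x
  induction x using Submodule.Quotient.induction_on with | H m => ?_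
  let N' : FGSubmodule M := ⟨N.1 ⊔ Submodule.span R {m}, N.2.sup (Submodule.fg_span_singleton m)⟩
  have hN : N ≤ N' := le_sup_left (a := N.1)
  have hm : Submodule.factor hN (Submodule.Quotient.mk m) = 0 :=
    (Submodule.Quotient.mk_eq_zero _).mpr
      (Submodule.mem_sup_right (Submodule.mem_span_singleton_self m))
  rw [← s.w (homOfLE hN)]
  exact (congrArg (s.ι.app N') hm).trans (map_zero _)

variable (M)

def quotientDiagramIsColimitZero :
    IsColimit (⟨ModuleCat.of R PUnit, 0⟩ : Cocone (quotientDiagram M)) where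
  desc _ := 0
  fac s N := by simp [quotientDiagram_cocone_app_eq_zero s N]
  uniq _ _ _ := by ext x; rw [Subsingleton.elim x 0, map_zero, map_zero]

end QuotientDiagram

instance uHom_obj_subsingleton (M N : ModuleCat.{u} R) [Subsingleton N] :
    Subsingleton ((uHom M).obj N) :=
  have : Subsingleton (M ⟶ N) := ⟨fun _ _ => by ext; exact Subsingleton.elim _ _⟩
  QuotientAddGroup.mk_surjective.subsingleton

theorem exists_fg_mkQ_mem_projFactor (M : ModuleCat.{u} R) [PreservesFilteredColimits (uHom M)] :
    ∃ N : Submodule R M, N.FG ∧ ModuleCat.ofHom N.mkQ ∈ projFactor M (ModuleCat.of R (M ⧸ N)) := by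
  have hc := isColimitOfPreserves (uHom M) (quotientDiagramIsColimitZero M)
  let j₀ : FGSubmodule M := ⟨⊥, Submodule.fg_bot⟩
  let x : (uHom M).obj ((quotientDiagram M).obj j₀) :=
    QuotientAddGroup.mk (ModuleCat.ofHom (⊥ : Submodule R M).mkQ)
  obtain ⟨N, f, _, hx⟩ := Concrete.isColimit_exists_of_rep_eq.{u} _ hc (j := j₀) x 0
    ((uHom_obj_subsingleton M (ModuleCat.of R PUnit)).elim _ _)
  -- `hx` unfolds to: the class of `M → M ⧸ ⊥ → M ⧸ N`, which is `N.mkQ`, is zero.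
  exact ⟨N.1, N.2, (QuotientAddGroup.eq_zero_iff _).mp hx⟩

/-- Let `G` be a group and `M` a `ℤG`-module such that the stable Hom functor
`Hom-underline_{ℤG}(M, −)` preserves filtered colimits.  Then there is a finitely generated
submodule `M₀ ≤ M` such that the quotient map `M → M/M₀` factors through a projective module
`Q`, and consequently `M` is isomorphic to a direct summand of `Q ⊕ M₀`. -/
theorem stableHom_finitary_implies_summand
    {G : Type u} [Group G] (M : ModuleCat.{u} (MonoidAlgebra ℤ G))
    (h : PreservesFilteredColimits (uHom M)) :
    ∃ M₀ : Submodule (MonoidAlgebra ℤ G) M, M₀.FG ∧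
      ∃ (Q : Type u) (_ : AddCommGroup Q) (_ : Module (MonoidAlgebra ℤ G) Q),
        Module.Projective (MonoidAlgebra ℤ G) Q ∧
        (∃ (g : M →ₗ[MonoidAlgebra ℤ G] Q) (h' : Q →ₗ[MonoidAlgebra ℤ G] (M ⧸ M₀)),
          h' ∘ₗ g = M₀.mkQ) ∧
        ∃ (C : Type u) (_ : AddCommGroup C) (_ : Module (MonoidAlgebra ℤ G) C),
          Nonempty ((Q × M₀) ≃ₗ[MonoidAlgebra ℤ G] (M × C)) := by
  obtain ⟨M₀, hM₀, Q, hQ, g, h', hgh⟩ := exists_fg_mkQ_mem_projFactor M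
  have hgh : h'.hom ∘ₗ g.hom = M₀.mkQ := congrArg ModuleCat.Hom.hom hgh
  exact ⟨M₀, hM₀, Q, _, _, hQ, ⟨g.hom, h'.hom, hgh⟩, _, _, _,
    M₀.nonempty_prod_equiv_prod_ker_of_mkQ_eq_comp g.hom h'.hom hgh⟩
end
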